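/- arXiv:1007.4285 — 4 statements merged into one kernel-verified Lean document; each statement's English description precedes it below -/
import Mathlib

section
/- Let G be a topological group, and E and H subgroups of G with E ⊆ H. If E is an essential subgroup of H and H is an essential subgroup of G, then E is an essential subgroup of G. -/
/-- The quasi-component of the identity (zero) element of a topological (additive) group:
the intersection of all clopen sets containing the identity. -/
def quasiComponent (G : Type*) [Zero G] [TopologicalSpace G] : Set G :=
  ⋂₀ {U : Set G | IsClopen U ∧ (0 : G) ∈ U}

/-- A subgroup `E` of a topological group `G` is *essential* (`E ≤_e G`) if `E ∩ N` is
non-trivial for every non-trivial closed normal subgroup `N` of `G`. -/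
def IsEssential {G : Type*} [AddGroup G] [TopologicalSpace G] (E : AddSubgroup G) : Prop :=
  ∀ N : AddSubgroup G, N.Normal → IsClosed (N : Set G) → N ≠ ⊥ → E ⊓ N ≠ ⊥

/-- A (Hausdorff) topological group is *minimal* if there is no strictly coarser Hausdorff
group topology on it. -/
def IsMinimalAddGroup (G : Type*) [AddGroup G] [tG : TopologicalSpace G] : Prop :=
  ∀ t : TopologicalSpace G, tG ≤ t → @IsTopologicalAddGroup G t _ → @T2Space G t → t = tG

/-- A space is *pseudocompact* if every continuous real-valued function on it is bounded. -/
def IsPseudocompact (X : Type*) [TopologicalSpace X] : Prop :=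
  ∀ f : X → ℝ, Continuous f → ∃ B : ℝ, ∀ x : X, |f x| ≤ B

namespace AddSubgroup

variable {G : Type*} [AddGroup G]

theorem addSubgroupOf_inf (A B H : AddSubgroup G) :
    (A ⊓ B).addSubgroupOf H = A.addSubgroupOf H ⊓ B.addSubgroupOf H :=
  comap_inf A B H.subtype

end AddSubgroup

theorem IsClosed.addSubgroupOf {G : Type*} [AddGroup G] [TopologicalSpace G] {N : AddSubgroup G}
    (hN : IsClosed (N : Set G)) (H : AddSubgroup G) : IsClosed (N.addSubgroupOf H : Set H) :=
  hN.preimage continuous_subtype_val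

theorem isEssential_trans_general {G : Type*} [AddGroup G] [TopologicalSpace G]
    (E H : AddSubgroup G)
    (h₁ : IsEssential (E.addSubgroupOf H)) (h₂ : IsEssential H) :
    IsEssential E := by
  intro N hN hN_closed hN_ne hEN
  have hHN : N.addSubgroupOf H ≠ ⊥ := by
    rw [Ne, AddSubgroup.addSubgroupOf_eq_bot, disjoint_comm, disjoint_iff]
    exact h₂ N hN hN_closed hN_ne
  refine h₁ _ (hN.addSubgroupOf H) (hN_closed.addSubgroupOf H) hHN ?_
  rw [← AddSubgroup.addSubgroupOf_inf, hEN, AddSubgroup.bot_addSubgroupOf]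

/-- **Lemma 2.1(a).** If `E ⊆ H` are subgroups of a topological group `G`, `E` is essential in
`H` and `H` is essential in `G`, then `E` is essential in `G`. -/
theorem isEssential_trans {G : Type*} [AddGroup G] [TopologicalSpace G] [IsTopologicalAddGroup G]
    (E H : AddSubgroup G) (hEH : E ≤ H)
    (h₁ : IsEssential (E.addSubgroupOf H)) (h₂ : IsEssential H) :
    IsEssential E :=
  isEssential_trans_general E H h₁ h₂
end

section
/- Let G be a topological group and E an essential subgroup of G. If L is an elementwise compact topological group, then L × E is an essential subgroup of L × G. -/
/-- A topological group is *elementwise compact* if each of its elements is contained in a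
compact subgroup. -/
def ElementwiseCompact (L : Type*) [AddGroup L] [TopologicalSpace L] : Prop :=
  ∀ x : L, ∃ K : AddSubgroup L, IsCompact (K : Set L) ∧ x ∈ K

/-!
Take `(l, g) ≠ 0` in a closed normal subgroup `N` of `L × G`. If `g = 0` it already lies in
`L × E`. Otherwise choose a compact subgroup `K ∋ l`: the `G`-coordinates of the elements of `N`
lying over `K` form a normal subgroup `P` of `G` containing `g`, and `P` is closed because the
projection `L × G → G` restricted to `K × G` is a closed map. Essentiality of `E` gives
`0 ≠ e ∈ E ∩ P`, i.e. `(k, e) ∈ N ∩ (L × E)` for some `k ∈ K`.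
-/

theorem IsClosed.image_snd_inter_prod_univ {X Y : Type*} [TopologicalSpace X] [TopologicalSpace Y]
    {C : Set (X × Y)} (hC : IsClosed C) {K : Set X} (hK : IsCompact K) :
    IsClosed (Prod.snd '' (C ∩ K ×ˢ Set.univ)) := by
  have : CompactSpace K := isCompact_iff_compactSpace.mp hK
  let incl : K × Y → X × Y := Prod.map Subtype.val id
  have himage : Prod.snd '' (C ∩ K ×ˢ Set.univ) = Prod.snd '' (incl ⁻¹' C) := by
    ext y
    constructor
    · rintro ⟨⟨x, y⟩, ⟨hxyC, hxK, -⟩, rfl⟩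
      exact ⟨(⟨x, hxK⟩, y), hxyC, rfl⟩
    · rintro ⟨⟨x, y⟩, hxyC, rfl⟩
      exact ⟨(x, y), ⟨hxyC, x.2, trivial⟩, rfl⟩
  rw [himage]
  exact isClosedMap_snd_of_compactSpace _ (hC.preimage (by fun_prop))

namespace AddSubgroup

variable {L G : Type*} [AddGroup L] [AddGroup G]

theorem mem_map_snd_inf_prod_top {N : AddSubgroup (L × G)} {K : AddSubgroup L} {y : G} :
    y ∈ (N ⊓ K.prod ⊤).map (AddMonoidHom.snd L G) ↔ ∃ k ∈ K, (k, y) ∈ N := by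
  constructor
  · rintro ⟨⟨k, y⟩, ⟨hkyN, hkK, -⟩, rfl⟩
    exact ⟨k, hkK, hkyN⟩
  · rintro ⟨k, hkK, hkyN⟩
    exact ⟨(k, y), ⟨hkyN, hkK, trivial⟩, rfl⟩

theorem Normal.map_snd_inf_prod_top {N : AddSubgroup (L × G)} (hN : N.Normal)
    (K : AddSubgroup L) : ((N ⊓ K.prod ⊤).map (AddMonoidHom.snd L G)).Normal where
  conj_mem y hy x := by
    obtain ⟨k, hkK, hkyN⟩ := mem_map_snd_inf_prod_top.mp hy
    refine mem_map_snd_inf_prod_top.mpr ⟨k, hkK, ?_⟩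
    simpa using hN.conj_mem _ hkyN (0, x)

theorem isClosed_map_snd_inf_prod_top [TopologicalSpace L] [TopologicalSpace G]
    {N : AddSubgroup (L × G)} (hN : IsClosed (N : Set (L × G)))
    {K : AddSubgroup L} (hK : IsCompact (K : Set L)) :
    IsClosed (((N ⊓ K.prod ⊤).map (AddMonoidHom.snd L G) : AddSubgroup G) : Set G) := by
  simpa [coe_map, coe_prod] using hN.image_snd_inter_prod_univ hK

theorem ne_bot_of_mem_ne_zero {H : AddSubgroup G} {x : G} (hxH : x ∈ H) (hx : x ≠ 0) :
    H ≠ ⊥ :=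
  fun h => hx (by simpa [h] using hxH)

end AddSubgroup

theorem prod_isEssential_of_elementwiseCompact_general {L G : Type*}
    [AddGroup L] [TopologicalSpace L]
    [AddGroup G] [TopologicalSpace G]
    (E : AddSubgroup G) (hE : IsEssential E) (hL : ElementwiseCompact L) :
    IsEssential ((⊤ : AddSubgroup L).prod E) := by
  intro N hN hNclosed hNbot
  obtain ⟨⟨l, g⟩, hlgN, hlg⟩ := N.bot_or_exists_ne_zero.resolve_left hNbot
  by_cases hg : g = 0
  · subst hg
    exact AddSubgroup.ne_bot_of_mem_ne_zero ⟨⟨trivial, E.zero_mem⟩, hlgN⟩ hlg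
  obtain ⟨K, hK, hlK⟩ := hL l
  set P := (N ⊓ K.prod ⊤).map (AddMonoidHom.snd L G)
  have hPbot : P ≠ ⊥ :=
    AddSubgroup.ne_bot_of_mem_ne_zero (AddSubgroup.mem_map_snd_inf_prod_top.mpr ⟨l, hlK, hlgN⟩) hg
  have hEP : E ⊓ P ≠ ⊥ :=
    hE P (hN.map_snd_inf_prod_top K) (AddSubgroup.isClosed_map_snd_inf_prod_top hNclosed hK) hPbot
  obtain ⟨e, ⟨heE, heP⟩, he⟩ := (E ⊓ P).bot_or_exists_ne_zero.resolve_left hEP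
  obtain ⟨k, -, hkeN⟩ := AddSubgroup.mem_map_snd_inf_prod_top.mp heP
  exact AddSubgroup.ne_bot_of_mem_ne_zero (x := (k, e)) ⟨⟨trivial, heE⟩, hkeN⟩
    (fun h => he (congrArg Prod.snd h))

/-- **Lemma 2.4.** If `E` is an essential subgroup of a topological group `G` and `L` is an
elementwise compact topological group, then `L × E` is essential in `L × G`. -/
theorem prod_isEssential_of_elementwiseCompact {L G : Type*}
    [AddGroup L] [TopologicalSpace L] [IsTopologicalAddGroup L]
    [AddGroup G] [TopologicalSpace G] [IsTopologicalAddGroup G]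
    (E : AddSubgroup G) (hE : IsEssential E) (hL : ElementwiseCompact L) :
    IsEssential ((⊤ : AddSubgroup L).prod E) :=
  prod_isEssential_of_elementwiseCompact_general E hE hL
end

section
/- Let M be a minimal abelian Hausdorff topological group, G a topological group, and E an essential subgroup of G. If M × E is minimal, then M × E is an essential subgroup of M̃ × E, where M̃ is the completion of M. -/
/-!
If `N` is a non-trivial closed normal subgroup of `M̃ × E` meeting `M × E` trivially, then
`M × E` maps injectively and continuously into the Hausdorff group `(M̃ × E) ⧸ N`, so by minimality
it is embedded there. A non-zero `n ∈ N` is a limit of points of the dense subgroup `M × E`; their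
images in the quotient tend to `0`, hence so do the points themselves, and `n` cannot be separated
from `0`. But the closure of `0` lies in `{0} × E ⊆ M × E` since `M̃` is Hausdorff (`E` need
not be), and `M × E` meets `N` only in `0`.
-/

open Filter Topology

theorem IsMinimalAddGroup.isEmbedding_of_injective {P Q : Type*} [AddGroup P]
    [TopologicalSpace P] [AddGroup Q] [TopologicalSpace Q] [IsTopologicalAddGroup Q] [T2Space Q]
    (hP : IsMinimalAddGroup P) (q : P →+ Q) (hq : Continuous q) (hinj : Function.Injective q) :
    IsEmbedding q := by
  refine ⟨⟨(hP _ (continuous_iff_le_induced.mp hq) (topologicalAddGroup_induced q) ?_).symm⟩, hinj⟩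
  let : TopologicalSpace P := .induced q inferInstance
  exact IsEmbedding.t2Space ⟨.induced q, hinj⟩

theorem inseparable_of_mem_closure_range_of_isInducing_comp {X Y Z : Type*}
    [TopologicalSpace X] [TopologicalSpace Y] [R1Space Y] [TopologicalSpace Z]
    {j : X → Y} {π : Y → Z} (hj : Continuous j) (hπ : Continuous π) (hπj : IsInducing (π ∘ j))
    {y : Y} (hy : y ∈ closure (Set.range j)) (x : X) (h : π y = π (j x)) :
    Inseparable y (j x) := by
  have : (comap j (𝓝 y)).NeBot := comap_neBot fun s hs => by
    obtain ⟨_, hs', x', rfl⟩ := mem_closure_iff_nhds.mp hy s hs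
    exact ⟨x', hs'⟩
  have h_le : comap j (𝓝 y) ≤ 𝓝 x := by
    rw [hπj.nhds_eq_comap, Function.comp_apply, ← h, ← comap_comap]
    exact comap_mono (hπ.tendsto y).le_comap
  by_contra hsep
  have hd := disjoint_nhds_nhds_iff_not_inseparable.mpr hsep
  exact (this.map j).ne
    (disjoint_self.mp (hd.mono map_comap_le ((map_mono h_le).trans (hj.tendsto x))))

theorem isEssential_range_of_isMinimalAddGroup {P K : Type*} [AddGroup P] [TopologicalSpace P]
    [AddGroup K] [TopologicalSpace K] [IsTopologicalAddGroup K] (j : P →+ K) (hj : Continuous j)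
    (hinj : Function.Injective j) (hdense : DenseRange j) (hP : IsMinimalAddGroup P)
    (hcl : closure ({0} : Set K) ⊆ Set.range j) :
    IsEssential j.range := by
  intro N _ hNcl hN hmeet
  have : IsClosed (N : Set K) := hNcl
  have hdisj : Disjoint j.range N := disjoint_iff.mpr hmeet
  let q : P →+ K ⧸ N := (QuotientAddGroup.mk' N).comp j
  have hq_inj : Function.Injective q := (injective_iff_map_eq_zero q).mpr fun x hx =>
    hinj <| by
      rw [map_zero]
      exact AddSubgroup.disjoint_def.mp hdisj ⟨x, rfl⟩ ((QuotientAddGroup.eq_zero_iff _).mp hx)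
  have hq_emb : IsEmbedding q :=
    hP.isEmbedding_of_injective q (QuotientAddGroup.continuous_mk.comp hj) hq_inj
  obtain ⟨⟨n, hnN⟩, hn⟩ := AddSubgroup.ne_bot_iff_exists_ne_zero.mp hN
  have hn0 : Inseparable n (j 0) :=
    inseparable_of_mem_closure_range_of_isInducing_comp hj QuotientAddGroup.continuous_mk
      hq_emb.isInducing (hdense n) 0 (by simpa [QuotientAddGroup.eq_zero_iff] using hnN)
  rw [map_zero] at hn0
  have hn_range : n ∈ Set.range j := hcl (specializes_iff_mem_closure.mp hn0.symm.specializes)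
  exact hn (Subtype.ext (AddSubgroup.disjoint_def.mp hdisj hn_range hnN))

theorem prodMin_essential_in_completion_prod_self_general {M : Type*} [AddCommGroup M]
    [TopologicalSpace M] [IsTopologicalAddGroup M] [T2Space M]
    {G : Type*} [AddGroup G] [TopologicalSpace G] [IsTopologicalAddGroup G]
    (E : AddSubgroup G)
    (hME : IsMinimalAddGroup (M × ↥E)) :
    letI : UniformSpace M := IsTopologicalAddGroup.rightUniformSpace M
    haveI : IsUniformAddGroup M := isUniformAddGroup_of_addCommGroup
    IsEssential ((UniformSpace.Completion.toCompl (α := M)).range.prod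
      (⊤ : AddSubgroup ↥E)) := by
  let : UniformSpace M := IsTopologicalAddGroup.rightUniformSpace M
  have : IsUniformAddGroup M := isUniformAddGroup_of_addCommGroup
  let j := (UniformSpace.Completion.toCompl (α := M)).prodMap (AddMonoidHom.id E)
  have hcl : closure {0} ⊆ Set.range j := fun x hx => by
    have hx₁ : x.1 ∈ closure {0} :=
      map_mem_closure continuous_fst hx fun y (hy : y = 0) => by simp [hy]
    rw [closure_singleton, Set.mem_singleton_iff] at hx₁
    exact ⟨(0, x.2), Prod.ext (by simp [j, hx₁]) rfl⟩
  have hj := isEssential_range_of_isMinimalAddGroup j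
    ((UniformSpace.Completion.continuous_coe M).prodMap continuous_id)
    ((UniformSpace.Completion.coe_injective M).prodMap Function.injective_id)
    (UniformSpace.Completion.denseRange_coe.prodMap denseRange_id) hME hcl
  rwa [AddMonoidHom.range_prodMap,
    (AddMonoidHom.range_eq_top (f := .id E)).mpr Function.surjective_id] at hj

/-- **Lemma 2.7(a).** Let `M` be a minimal abelian Hausdorff group, `G` a topological group and
`E` an essential subgroup of `G`. If `M × E` is minimal, then `M × E` is an essential subgroup
of `M̃ × E`, where `M̃` is the completion of `M`. -/
theorem prodMin_essential_in_completion_prod_self {M : Type*} [AddCommGroup M]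
    [TopologicalSpace M] [IsTopologicalAddGroup M] [T2Space M]
    {G : Type*} [AddGroup G] [TopologicalSpace G] [IsTopologicalAddGroup G]
    (hM : IsMinimalAddGroup M) (E : AddSubgroup G) (hE : IsEssential E)
    (hME : IsMinimalAddGroup (M × ↥E)) :
    letI : UniformSpace M := IsTopologicalAddGroup.rightUniformSpace M
    haveI : IsUniformAddGroup M := isUniformAddGroup_of_addCommGroup
    IsEssential ((UniformSpace.Completion.toCompl (α := M)).range.prod
      (⊤ : AddSubgroup ↥E)) :=
  prodMin_essential_in_completion_prod_self_general E hME
end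

section
/- Every closed subgroup of a perfectly minimal abelian Hausdorff topological group is perfectly minimal. -/
universe u

/-- A topological group `M` is *perfectly minimal* if `M × H` is minimal for every minimal
(Hausdorff) topological group `H`. -/
def IsPerfectlyMinimal (M : Type u) [AddGroup M] [TopologicalSpace M] : Prop :=
  ∀ (H : Type u) [AddGroup H] [TopologicalSpace H] [IsTopologicalAddGroup H] [T2Space H],
    IsMinimalAddGroup H → IsMinimalAddGroup (M × H)

/-!
Let `τ` be a Hausdorff group topology on `H × K` coarser than the product topology, and give
`M × K` the quotient topology of `M × (H × K, τ)` under `(u, (h, k)) ↦ (u + h, k)`. This is a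
group topology because `M` is abelian, it is Hausdorff because `H` is closed (the kernel is the
graph of `h ↦ (-h, 0)` over `H`), and it is coarser than the product topology because
`k ↦ (0, k)` is `τ`-continuous. Minimality of `M × K` makes it the product topology, and
restricting to `H × K` gives back `τ`.
-/

open Topology

namespace IsMinimalAddGroup

/-- The quotient topology transported along `φ` is a Hausdorff group topology, coarser than the
given one thanks to the continuous section `s`; minimality makes the two equal. -/
theorem continuous_of_isClosed_ker {G P : Type*} [AddGroup G] [TopologicalSpace G]
    [IsTopologicalAddGroup G] [AddGroup P] [tP : TopologicalSpace P] (hP : IsMinimalAddGroup P)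
    (φ : G →+ P) (hker : IsClosed (φ.ker : Set G)) {s : P → G} (hs : Continuous s)
    (hφs : Function.RightInverse s φ) : Continuous φ := by
  have := hker -- an instance making `G ⧸ φ.ker` Hausdorff
  let e := (QuotientAddGroup.quotientKerEquivOfSurjective φ hφs.surjective).symm
  have he : e ∘ φ = (↑) := funext fun g => e.eq_symm_apply.1 rfl
  have hσ : TopologicalSpace.induced e inferInstance = tP := by
    refine hP _ (continuous_iff_le_induced.1 ?_) (topologicalAddGroup_induced e.toAddMonoidHom)
      (@IsEmbedding.t2Space _ _ (_) _ _ _ e.injective.isEmbedding_induced)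
    have : ⇑e = ((↑) : G → G ⧸ φ.ker) ∘ s := by
      rw [← he, Function.comp_assoc, hφs.comp_eq_id]; rfl
    rw [this]
    exact continuous_quotient_mk'.comp hs
  rw [← hσ]
  exact continuous_induced_rng.2 (he ▸ continuous_quotient_mk')

theorem continuous_symm_of_isClosed_addSubgroup_prod {M K N : Type*} [AddCommGroup M]
    [TopologicalSpace M] [IsTopologicalAddGroup M] [AddGroup K] [TopologicalSpace K] [AddGroup N]
    [TopologicalSpace N] [IsTopologicalAddGroup N] [T2Space N] (hMK : IsMinimalAddGroup (M × K))
    {H : AddSubgroup M} (hH : IsClosed (H : Set M)) (e : H × K ≃+ N) (he : Continuous e) :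
    Continuous e.symm := by
  let j : N →+ M × K := (H.subtype.prodMap (AddMonoidHom.id K)).comp e.symm.toAddMonoidHom
  -- additive because `(u, 0)` is central in `M × K`
  let φ : M × N →+ M × K := .mk' (fun x => ((x.1, 0) : M × K) + j x.2) fun x y => by
    simp only [Prod.fst_add, Prod.snd_add, map_add]
    ext <;> simp [add_add_add_comm]
  have hker : (φ.ker : Set (M × N)) = Prod.map (↑) id '' {p : H × N | p.2 = e (-p.1, 0)} := by
    ext ⟨u, n⟩
    simp only [SetLike.mem_coe, AddMonoidHom.mem_ker, Set.mem_image, Set.mem_ofPred_eq,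
      Prod.exists, Prod.map, Prod.ext_iff]
    constructor
    · rintro ⟨hu, hk⟩
      simp only [AddEquiv.toAddMonoidHom_eq_coe, AddMonoidHom.coe_comp, AddMonoidHom.coe_prodMap,
        AddSubgroup.coe_subtype, AddMonoidHom.coe_id, AddMonoidHom.coe_coe, Function.comp_apply,
        AddMonoidHom.mk'_apply, Prod.fst_add, Prod.map_fst, Prod.fst_zero, Prod.snd_add,
        Prod.map_snd, id_eq, zero_add, Prod.snd_zero, φ, j] at hu hk
      refine ⟨-(e.symm n).1, n, ?_, ?_, rfl⟩
      · rw [neg_neg, ← hk]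
        exact (e.apply_symm_apply n).symm
      · simp [← eq_neg_of_add_eq_zero_left hu]
    · rintro ⟨h, _, rfl, rfl, rfl⟩
      simp [φ, j]
  have hφ : Continuous φ := by
    refine hMK.continuous_of_isClosed_ker φ ?_ (s := fun x => (x.1, e (0, x.2))) (by fun_prop)
      fun x => by simp [φ, j]
    rw [hker]
    exact (hH.isClosedEmbedding_subtypeVal.prodMap .id).isClosedMap _
      (isClosed_eq continuous_snd (by fun_prop))
  have hj : Continuous j := by
    have : ⇑j = φ ∘ fun n => (0, n) := funext fun n => by simp [φ]
    exact this ▸ hφ.comp (by fun_prop)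
  exact (IsInducing.subtypeVal.prodMap IsInducing.id).continuous_iff.2 hj

theorem addSubgroup_prod {M K : Type*} [AddCommGroup M] [TopologicalSpace M]
    [IsTopologicalAddGroup M] [AddGroup K] [TopologicalSpace K] (hMK : IsMinimalAddGroup (M × K))
    {H : AddSubgroup M} (hH : IsClosed (H : Set M)) : IsMinimalAddGroup (H × K) := by
  intro t ht htg ht2
  have := @continuous_symm_of_isClosed_addSubgroup_prod M K (H × K) _ _ _ _ _ _ t htg ht2 hMK H
    hH (.refl _) (continuous_id_iff_le.2 ht)
  exact le_antisymm (continuous_id_iff_le.1 this) ht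

end IsMinimalAddGroup

theorem isPerfectlyMinimal_of_isClosed_addSubgroup_general {M : Type u} [AddCommGroup M]
    [TopologicalSpace M] [IsTopologicalAddGroup M]
    (hM : IsPerfectlyMinimal M) (H : AddSubgroup M) (hH : IsClosed (H : Set M)) :
    IsPerfectlyMinimal ↥H :=
  fun K _ _ _ _ hK => (hM K hK).addSubgroup_prod hH

/-- **Remark 2.9.** Every closed subgroup of a perfectly minimal abelian Hausdorff topological
group is perfectly minimal. -/
theorem isPerfectlyMinimal_of_isClosed_addSubgroup {M : Type u} [AddCommGroup M]
    [TopologicalSpace M] [IsTopologicalAddGroup M] [T2Space M]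
    (hM : IsPerfectlyMinimal M) (H : AddSubgroup M) (hH : IsClosed (H : Set M)) :
    IsPerfectlyMinimal ↥H :=
  isPerfectlyMinimal_of_isClosed_addSubgroup_general hM H hH
end
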